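/- Let H be a 3-graph on n vertices with δ₂(H) > 7n/9 and suppose T₁, T₂, T₃ are three distinct tight components of the tetrahedral graph 𝒯(H). Then there do not exist vertices v₁, v₂, v₃ of H such that φ(vᵢ) = {T₁,T₂,T₃} \ {Tᵢ} for each i ∈ {1,2,3}. -/

import Mathlib

open Finset

/-- The tetrahedral 4-graph of a 3-graph `E`: all 4-sets of vertices all of whose
3-element subsets are edges of `E`. -/
def tet {V : Type*} [Fintype V] [DecidableEq V] (E : Finset (Finset V)) :
    Finset (Finset V) :=
  (Finset.powersetCard 4 Finset.univ).filter fun K =>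
    ∀ t ∈ Finset.powersetCard 3 K, t ∈ E

/-- There is a tight walk in the 4-graph `T` from the edge `e` to the edge `f`:
a vertex sequence starting with the vertices of `e`, ending with the vertices of
`f`, in which every 4 consecutive vertices form an edge of `T`. -/
def TightConn {V : Type*} [DecidableEq V] (T : Finset (Finset V))
    (e f : Finset V) : Prop :=
  ∃ l : List V, 4 ≤ l.length ∧ (l.take 4).toFinset = e ∧
    (l.drop (l.length - 4)).toFinset = f ∧
    ∀ i, i + 4 ≤ l.length → ((l.drop i).take 4).toFinset ∈ T

/-- The edges `e` and `f` of the 3-graph `E` lie in the same tight component of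
the tetrahedral graph `tet E`: some tetrahedron containing `e` is tightly
connected to some tetrahedron containing `f`. -/
def EdgeConn {V : Type*} [Fintype V] [DecidableEq V] (E : Finset (Finset V))
    (e f : Finset V) : Prop :=
  ∃ K K', K ∈ tet E ∧ K' ∈ tet E ∧ e ⊆ K ∧ f ⊆ K' ∧ TightConn (tet E) K K'

/-- The edge `e` of the 3-graph `E` lies in the tight component of the
tetrahedron `K`. -/
def EdgeInComp {V : Type*} [Fintype V] [DecidableEq V] (E : Finset (Finset V))
    (e K : Finset V) : Prop :=
  ∃ K', K' ∈ tet E ∧ e ⊆ K' ∧ TightConn (tet E) K' K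

/-!
Every edge lies in the tight component of at most one `K i`, so an edge through `v i` and `v j`
lies in that of `K k`, `k` the third index, and the `v i` are distinct. Each pair of vertices
misses fewer than `2n/9` vertices in its link, so some `w` forms an edge with every pair
`v i, v j`, and more than `n/3` vertices `z` form an edge with every pair `v i, w`. If such a `z`
formed edges with two pairs `v i, v j` and `v i, v k`, then `v i v j w z` and `v i v k w z` would be
tetrahedra sharing three vertices, joining the components of `K k` and `K j`. So the links of the
three pairs `v i, v j`, each missing fewer than `2n/9` vertices, are disjoint on a set of more than
`n/3` vertices, which is impossible.

Tight connectivity of tetrahedra is the reflexive-transitive closure of sharing three vertices,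
hence an equivalence relation.
-/

namespace Finset

variable {α : Type*} [DecidableEq α]

theorem ne_of_card_eq_three {a b c : α} (h : #({a, b, c} : Finset α) = 3) :
    a ≠ b ∧ a ≠ c ∧ b ≠ c := by
  refine ⟨?_, ?_, ?_⟩ <;> rintro rfl <;> simp at h <;>
    exact absurd h (card_le_two.trans_lt (by norm_num)).ne

theorem exists_eq_insert_erase_of_card_le_card_inter_add_one {A B : Finset α} (hAB : #A = #B)
    (hB : B.Nonempty) (h : #B ≤ #(A ∩ B) + 1) :
    ∃ m ∈ B, ∃ x, A = insert x (B.erase m) := by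
  by_cases hBA : B ⊆ A
  · obtain ⟨m, hm⟩ := hB
    exact ⟨m, hm, m, by rw [insert_erase hm]; exact (eq_of_subset_of_card_le hBA hAB.le).symm⟩
  obtain ⟨m, hmB, hmA⟩ := not_subset.mp hBA
  have hcard : #(B.erase m) + 1 = #B := card_erase_add_one hmB
  have herase : B.erase m ⊆ A := by
    have hsub : A ∩ B ⊆ B.erase m := fun y hy =>
      mem_erase.mpr ⟨fun hym => hmA (hym ▸ (mem_inter.mp hy).1), (mem_inter.mp hy).2⟩
    rw [← eq_of_subset_of_card_le hsub (by omega)]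
    exact inter_subset_left
  obtain ⟨x, hxA, hx⟩ := exists_mem_notMem_of_card_lt_card (s := B.erase m) (t := A) (by omega)
  refine ⟨m, hmB, x, (eq_of_subset_of_card_le (insert_subset hxA herase) ?_).symm⟩
  rw [card_insert_of_notMem hx]
  omega

section Fintype

variable [Fintype α]

theorem card_le_card_inter_add_card_compl (s t : Finset α) : #s ≤ #(s ∩ t) + #tᶜ :=
  calc #s ≤ #(s ∩ t ∪ tᶜ) := card_le_card fun x hx => by by_cases x ∈ t <;> simp [*]
    _ ≤ #(s ∩ t) + #tᶜ := card_union_le _ _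

theorem card_compl_inter_le (s t : Finset α) : #(s ∩ t)ᶜ ≤ #sᶜ + #tᶜ := by
  rw [compl_inter]
  exact card_union_le _ _

theorem nine_mul_card_compl_lt {s : Finset α} (h : (7 : ℝ) * Fintype.card α / 9 < #s) :
    9 * #sᶜ < 2 * Fintype.card α := by
  have h' : 7 * Fintype.card α < 9 * #s := by
    exact_mod_cast (show (7 * Fintype.card α : ℝ) < 9 * #s by linarith)
  have := card_le_univ s
  rw [card_compl]
  omega

theorem exists_mem_two_of_card_compl_lt {S P Q R : Finset α}
    (h : 2 * #Sᶜ + #Pᶜ + #Qᶜ + #Rᶜ < 2 * Fintype.card α) :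
    ∃ z ∈ S, z ∈ P ∩ Q ∨ z ∈ P ∩ R ∨ z ∈ Q ∩ R := by
  by_contra! hS
  have hdisj : #(S ∩ P) + #(S ∩ Q) + #(S ∩ R) ≤ #S := by
    rw [← card_union_of_disjoint, ← card_union_of_disjoint]
    · exact card_le_card (union_subset (union_subset inter_subset_left inter_subset_left)
        inter_subset_left)
    all_goals rw [disjoint_left]; grind
  have hP := card_le_card_inter_add_card_compl S P
  have hQ := card_le_card_inter_add_card_compl S Q
  have hR := card_le_card_inter_add_card_compl S R
  have hS := card_compl S
  have := card_le_univ S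
  omega

end Fintype

end Finset

section TightWalk

variable {V : Type*} [DecidableEq V] {T : Finset (Finset V)}

def IsTightWalk (T : Finset (Finset V)) (l : List V) : Prop :=
  ∀ i, i + 4 ≤ l.length → ((l.drop i).take 4).toFinset ∈ T

theorem isTightWalk_cons_iff {a b c d : V} {l : List V} :
    IsTightWalk T (a :: b :: c :: d :: l) ↔
      {a, b, c, d} ∈ T ∧ IsTightWalk T (b :: c :: d :: l) := by
  constructor
  · intro h
    exact ⟨by simpa using h 0 (by simp),
      fun i hi => by simpa using h (i + 1) (by simp at hi ⊢; omega)⟩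
  · rintro ⟨h0, h⟩ (_ | i) hi
    · simpa using h0
    · simpa using h i (by simp at hi ⊢; omega)

/-- A tight walk in `T` starting with the ordered quadruple `a, b, c, d` and ending in `Y`. -/
def TightWalkFrom (T : Finset (Finset V)) (a b c d : V) (Y : Finset V) : Prop :=
  ∃ l : List V, IsTightWalk T (a :: b :: c :: d :: l) ∧
    ((a :: b :: c :: d :: l).drop l.length).toFinset = Y

theorem tightConn_iff_exists_tightWalkFrom {X Y : Finset V} :
    TightConn T X Y ↔ ∃ a b c d, {a, b, c, d} = X ∧ TightWalkFrom T a b c d Y := by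
  constructor
  · rintro ⟨_ | ⟨a, _ | ⟨b, _ | ⟨c, _ | ⟨d, l⟩⟩⟩⟩, hlen, rfl, rfl, hw⟩
    iterate 4 simp at hlen
    exact ⟨a, b, c, d, by simp, l, hw, by simp⟩
  · rintro ⟨a, b, c, d, rfl, l, hw, rfl⟩
    exact ⟨a :: b :: c :: d :: l, by simp, by simp, by simp, hw⟩

namespace TightWalkFrom

variable {a b c d : V} {Y : Finset V}

theorem mem (h : TightWalkFrom T a b c d Y) : {a, b, c, d} ∈ T :=
  let ⟨_, hw, _⟩ := h; (isTightWalk_cons_iff.mp hw).1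

theorem cons {x : V} (hx : {x, a, b, c} ∈ T) (h : TightWalkFrom T a b c d Y) :
    TightWalkFrom T x a b c Y := by
  obtain ⟨l, hw, rfl⟩ := h
  exact ⟨d :: l, isTightWalk_cons_iff.mpr ⟨hx, hw⟩, by simp⟩

theorem rotate (h : TightWalkFrom T a b c d Y) : TightWalkFrom T d a b c Y :=
  h.cons (by convert h.mem using 1; grind)

theorem exists_rotate {m : V} (h : TightWalkFrom T a b c d Y)
    (hm : m ∈ ({a, b, c, d} : Finset V)) :
    ∃ p q r, TightWalkFrom T p q r m Y ∧ insert m {p, q, r} = ({a, b, c, d} : Finset V) := by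
  simp only [mem_insert, mem_singleton] at hm
  rcases hm with rfl | rfl | rfl | rfl
  · exact ⟨_, _, _, h.rotate.rotate.rotate, rfl⟩
  · exact ⟨_, _, _, h.rotate.rotate, by grind⟩
  · exact ⟨_, _, _, h.rotate, by grind⟩
  · exact ⟨_, _, _, h, by grind⟩

end TightWalkFrom

def TightAdj (T : Finset (Finset V)) (A B : Finset V) : Prop :=
  A ∈ T ∧ B ∈ T ∧ 3 ≤ #(A ∩ B)

instance : Std.Symm (TightAdj T) :=
  ⟨fun _ _ ⟨hA, hB, h⟩ => ⟨hB, hA, by rwa [inter_comm]⟩⟩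

variable {A B Y : Finset V}

theorem TightConn.of_tightAdj (hT : ∀ K ∈ T, #K = 4) (hAB : TightAdj T A B)
    (h : TightConn T B Y) : TightConn T A Y := by
  obtain ⟨a, b, c, d, rfl, hw⟩ := tightConn_iff_exists_tightWalkFrom.mp h
  obtain ⟨hA, hB, hAB⟩ := hAB
  obtain ⟨m, hm, x, rfl⟩ := exists_eq_insert_erase_of_card_le_card_inter_add_one
    (B := {a, b, c, d}) (by rw [hT _ hA, hT _ hB]) (by simp) (by rw [hT _ hB]; omega)
  -- rotate the walk so that the vertex `m` to be dropped comes fourth, then prepend `x`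
  obtain ⟨p, q, r, hw, hset⟩ := hw.exists_rotate hm
  have hmpqr : m ∉ ({p, q, r} : Finset V) := fun h => by
    have := hT _ hB
    rw [← hset, insert_eq_of_mem h] at this
    exact absurd (card_le_three (a := p) (b := q) (c := r)) (by omega)
  have herase : ({a, b, c, d} : Finset V).erase m = {p, q, r} := by
    rw [← hset, erase_insert hmpqr]
  rw [herase] at hA ⊢
  exact tightConn_iff_exists_tightWalkFrom.mpr ⟨x, p, q, r, rfl, hw.cons hA⟩

theorem tightConn_self (hT : ∀ K ∈ T, #K = 4) (hA : A ∈ T) : TightConn T A A := by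
  have hlen : A.toList.length = 4 := by rw [length_toList, hT A hA]
  refine ⟨A.toList, hlen.ge, by simp [List.take_of_length_le hlen.le], by simp [hlen], ?_⟩
  intro i hi
  obtain rfl : i = 0 := by omega
  simpa [List.take_of_length_le hlen.le] using hA

theorem TightConn.of_reflTransGen (hT : ∀ K ∈ T, #K = 4) (hA : A ∈ T)
    (h : Relation.ReflTransGen (TightAdj T) A B) : TightConn T A B := by
  induction h using Relation.ReflTransGen.head_induction_on with
  | refl => exact tightConn_self hT hA
  | head hAC _ ih => exact (ih hAC.2.1).of_tightAdj hT hAC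

theorem TightWalkFrom.reflTransGen {a b c d : V} (hT : ∀ K ∈ T, #K = 4)
    (h : TightWalkFrom T a b c d Y) : Relation.ReflTransGen (TightAdj T) {a, b, c, d} Y := by
  obtain ⟨l, hw, rfl⟩ := h
  induction l generalizing a b c d with
  | nil => simpa using Relation.ReflTransGen.refl
  | cons e l ih =>
    obtain ⟨habcd, hw⟩ := isTightWalk_cons_iff.mp hw
    have hbcd : 3 ≤ #({b, c, d} : Finset V) := by
      have := card_insert_le a {b, c, d}
      rw [hT _ habcd] at this
      omega
    refine .head ⟨habcd, (isTightWalk_cons_iff.mp hw).1, hbcd.trans (card_le_card ?_)⟩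
      (by simpa using ih hw)
    grind

theorem TightConn.reflTransGen (hT : ∀ K ∈ T, #K = 4) (h : TightConn T A B) :
    Relation.ReflTransGen (TightAdj T) A B := by
  obtain ⟨a, b, c, d, rfl, hw⟩ := tightConn_iff_exists_tightWalkFrom.mp h
  exact hw.reflTransGen hT

end TightWalk

section Tetrahedra

variable {V : Type*} [Fintype V] [DecidableEq V] {E : Finset (Finset V)}

theorem card_of_mem_tet {K : Finset V} (hK : K ∈ tet E) : #K = 4 :=
  (mem_powersetCard.mp (mem_filter.mp hK).1).2

theorem mem_tet_of_forall_erase_mem {K : Finset V} (hK : #K = 4)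
    (h : ∀ x ∈ K, K.erase x ∈ E) : K ∈ tet E := by
  refine mem_filter.mpr ⟨mem_powersetCard.mpr ⟨subset_univ K, hK⟩, fun t ht => ?_⟩
  obtain ⟨htK, ht3⟩ := mem_powersetCard.mp ht
  obtain ⟨x, hxK, hxt⟩ := exists_mem_notMem_of_card_lt_card (s := t) (t := K) (by omega)
  have hterase : t ⊆ K.erase x := fun y hy =>
    mem_erase.mpr ⟨fun hyx => hxt (hyx ▸ hy), htK hy⟩
  rw [eq_of_subset_of_card_le hterase (by rw [card_erase_of_mem hxK]; omega)]
  exact h x hxK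

theorem mem_tet_of_faces_mem (h3 : ∀ e ∈ E, #e = 3) {a b c d : V}
    (habc : {a, b, c} ∈ E) (habd : {a, b, d} ∈ E) (hacd : {a, c, d} ∈ E)
    (hbcd : {b, c, d} ∈ E) : {a, b, c, d} ∈ tet E := by
  obtain ⟨hab, hac, hbc⟩ := ne_of_card_eq_three (h3 _ habc)
  obtain ⟨-, had, hbd⟩ := ne_of_card_eq_three (h3 _ habd)
  obtain ⟨-, -, hcd⟩ := ne_of_card_eq_three (h3 _ hacd)
  refine mem_tet_of_forall_erase_mem ?_ ?_
  · rw [card_insert_of_notMem (by simp [hab, hac, had]),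
      card_insert_of_notMem (by simp [hbc, hbd]), card_pair hcd]
  · simp [erase_insert_of_ne, *]

end Tetrahedra

section Components

variable {V : Type*} [Fintype V] [DecidableEq V] {E : Finset (Finset V)} {e f X Y : Finset V}

theorem EdgeInComp.reflTransGen {A : Finset V} (he : EdgeInComp E e X) (hA : A ∈ tet E)
    (heA : e ⊆ A) (he3 : 3 ≤ #e) : Relation.ReflTransGen (TightAdj (tet E)) A X := by
  obtain ⟨L, hL, heL, hLX⟩ := he
  exact .head ⟨hA, hL, he3.trans (card_le_card (subset_inter heA heL))⟩
    (hLX.reflTransGen fun _ => card_of_mem_tet)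

theorem tightConn_of_edgeInComp_of_tightAdj {A B : Finset V} (hX : X ∈ tet E)
    (he : EdgeInComp E e X) (hf : EdgeInComp E f Y) (hAB : TightAdj (tet E) A B)
    (heA : e ⊆ A) (hfB : f ⊆ B) (he3 : 3 ≤ #e) (hf3 : 3 ≤ #f) : TightConn (tet E) X Y :=
  .of_reflTransGen (fun _ => card_of_mem_tet) hX <|
    (Std.Symm.symm _ _ (he.reflTransGen hAB.1 heA he3)).trans
      (.head hAB (hf.reflTransGen hAB.2.1 hfB hf3))

theorem EdgeInComp.tightConn (hX : X ∈ tet E) (he3 : 3 ≤ #e) (heX : EdgeInComp E e X)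
    (heY : EdgeInComp E e Y) : TightConn (tet E) X Y := by
  obtain ⟨L, hL, heL, -⟩ := id heX
  exact tightConn_of_edgeInComp_of_tightAdj hX heX heY
    ⟨hL, hL, by rw [inter_self, card_of_mem_tet hL]; omega⟩ heL heL he3 he3

theorem eq_of_edgeInComp {ι : Type*} (h3 : ∀ e ∈ E, #e = 3) {K : ι → Finset V}
    (hK : ∀ i, K i ∈ tet E) (hdist : ∀ i j, i ≠ j → ¬ TightConn (tet E) (K i) (K j))
    (he : e ∈ E) {i j : ι} (hi : EdgeInComp E e (K i)) (hj : EdgeInComp E e (K j)) : i = j :=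
  by_contra fun hij => hdist i j hij (hi.tightConn (hK i) (h3 e he).ge hj)

end Components

section Link

variable {V : Type*} [Fintype V] [DecidableEq V] {E : Finset (Finset V)}

/-- `δ₂(H)` is the minimum of `#(link E u v)` over pairs `u ≠ v`. -/
def link (E : Finset (Finset V)) (u v : V) : Finset V :=
  univ.filter fun w => ({u, v, w} : Finset V) ∈ E

@[simp]
theorem mem_link {u v w : V} : w ∈ link E u v ↔ {u, v, w} ∈ E := by
  simp [link]

theorem link_comm (u v : V) : link E u v = link E v u := by
  ext w
  simp [insert_comm]

theorem exists_forall_mem_link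
    (hlink : ∀ u v, u ≠ v → 9 * #(link E u v)ᶜ < 2 * Fintype.card V)
    {v : Fin 3 → V} (hv : Function.Injective v) :
    ∃ w, ∀ i j, i ≠ j → w ∈ link E (v i) (v j) := by
  obtain ⟨w, hw⟩ := (card_compl_lt_iff_nonempty
    (link E (v 0) (v 1) ∩ link E (v 0) (v 2) ∩ link E (v 1) (v 2))).mp (by
      have := card_compl_inter_le (link E (v 0) (v 1) ∩ link E (v 0) (v 2)) (link E (v 1) (v 2))
      have := card_compl_inter_le (link E (v 0) (v 1)) (link E (v 0) (v 2))
      have := hlink (v 0) (v 1) (hv.ne (by decide))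
      have := hlink (v 0) (v 2) (hv.ne (by decide))
      have := hlink (v 1) (v 2) (hv.ne (by decide))
      omega)
  simp only [mem_inter] at hw
  refine ⟨w, fun i j hij => ?_⟩
  fin_cases i <;> fin_cases j <;>
    simp_all [insert_comm (v 1) (v 0), insert_comm (v 2) (v 0), insert_comm (v 2) (v 1)]

theorem exists_mem_two_links_of_forall_mem_link (h3 : ∀ e ∈ E, #e = 3)
    (hlink : ∀ u v, u ≠ v → 9 * #(link E u v)ᶜ < 2 * Fintype.card V)
    {v : Fin 3 → V} (hv : Function.Injective v) {w : V}
    (hw : ∀ i j, i ≠ j → w ∈ link E (v i) (v j)) :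
    ∃ z, (∀ i, z ∈ link E (v i) w) ∧ ∃ i j k, i ≠ j ∧ i ≠ k ∧ j ≠ k ∧
      z ∈ link E (v i) (v j) ∧ z ∈ link E (v i) (v k) := by
  have hvw : ∀ i, v i ≠ w := fun i => by
    obtain ⟨j, hij⟩ : ∃ j, i ≠ j := ⟨i + 1, by fin_cases i <;> decide⟩
    exact (ne_of_card_eq_three (h3 _ (mem_link.mp (hw i j hij)))).2.1
  obtain ⟨z, hz, hzv⟩ := exists_mem_two_of_card_compl_lt
    (S := link E (v 0) w ∩ link E (v 1) w ∩ link E (v 2) w)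
    (P := link E (v 0) (v 1)) (Q := link E (v 0) (v 2)) (R := link E (v 1) (v 2)) (by
      have := card_compl_inter_le (link E (v 0) w ∩ link E (v 1) w) (link E (v 2) w)
      have := card_compl_inter_le (link E (v 0) w) (link E (v 1) w)
      have := hlink _ _ (hvw 0)
      have := hlink _ _ (hvw 1)
      have := hlink _ _ (hvw 2)
      have := hlink (v 0) (v 1) (hv.ne (by decide))
      have := hlink (v 0) (v 2) (hv.ne (by decide))
      have := hlink (v 1) (v 2) (hv.ne (by decide))
      omega)
  simp only [mem_inter] at hz hzv
  refine ⟨z, fun i => by fin_cases i <;> simp_all, ?_⟩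
  rcases hzv with ⟨h01, h02⟩ | ⟨h01, h12⟩ | ⟨h02, h12⟩
  · exact ⟨0, 1, 2, by decide, by decide, by decide, h01, h02⟩
  · exact ⟨1, 0, 2, by decide, by decide, by decide, by rwa [link_comm], h12⟩
  · exact ⟨2, 0, 1, by decide, by decide, by decide, by rwa [link_comm], by rwa [link_comm]⟩

theorem tightConn_of_mem_link (h3 : ∀ e ∈ E, #e = 3) {X Y : Finset V} (hX : X ∈ tet E)
    {a b c w z : V} (hXab : ∀ e ∈ E, a ∈ e → b ∈ e → EdgeInComp E e X)
    (hYac : ∀ e ∈ E, a ∈ e → c ∈ e → EdgeInComp E e Y)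
    (hwb : w ∈ link E a b) (hwc : w ∈ link E a c) (hza : z ∈ link E a w)
    (hzb : z ∈ link E b w) (hzc : z ∈ link E c w) (hzab : z ∈ link E a b)
    (hzac : z ∈ link E a c) : TightConn (tet E) X Y := by
  simp only [mem_link] at *
  have hawz : 3 ≤ #(({a, b, w, z} : Finset V) ∩ {a, c, w, z}) :=
    calc 3 = #({a, w, z} : Finset V) := (h3 _ hza).symm
      _ ≤ _ := card_le_card fun x => by simp; tauto
  refine tightConn_of_edgeInComp_of_tightAdj hX (hXab _ hwb (by simp) (by simp))
    (hYac _ hwc (by simp) (by simp))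
    ⟨mem_tet_of_faces_mem h3 hwb hzab hza hzb, mem_tet_of_faces_mem h3 hwc hzac hza hzc, hawz⟩
    (fun x => by simp; tauto) (fun x => by simp; tauto) (h3 _ hwb).ge (h3 _ hwc).ge

end Link

/-- If `δ₂(H) > 7n/9` and `K 0, K 1, K 2` are tetrahedra lying in three pairwise
distinct tight components of `𝒯(H)`, then there do not exist vertices
`v 0, v 1, v 2` such that, for each `i`, the set of tight components of edges
through `v i` is exactly the two components of `K j` for `j ≠ i`. -/
theorem no_alternating_triangle {V : Type*} [Fintype V] [DecidableEq V]
    (E : Finset (Finset V)) (h3 : ∀ e ∈ E, e.card = 3)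
    (hδ : ∀ u v : V, u ≠ v →
      (7 : ℝ) * Fintype.card V / 9 <
        ((Finset.univ.filter fun w => ({u, v, w} : Finset V) ∈ E).card : ℝ))
    (K : Fin 3 → Finset V) (hK : ∀ i, K i ∈ tet E)
    (hdist : ∀ i j, i ≠ j → ¬ TightConn (tet E) (K i) (K j)) :
    ¬ ∃ v : Fin 3 → V, ∀ i,
        (∀ e ∈ E, v i ∈ e → ∃ j, j ≠ i ∧ EdgeInComp E e (K j)) ∧
        (∀ j, j ≠ i → ∃ e ∈ E, v i ∈ e ∧ EdgeInComp E e (K j)) := by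
  rintro ⟨v, hv⟩
  have hlink : ∀ u u', u ≠ u' → 9 * #(link E u u')ᶜ < 2 * Fintype.card V :=
    fun u u' h => nine_mul_card_compl_lt (hδ u u' h)
  have hpair : ∀ i j k, i ≠ j → i ≠ k → j ≠ k →
      ∀ e ∈ E, v i ∈ e → v j ∈ e → EdgeInComp E e (K k) := by
    intro i j k hij hik hjk e he hi hj
    obtain ⟨a, hai, ha⟩ := (hv i).1 e he hi
    obtain ⟨b, hbj, hb⟩ := (hv j).1 e he hj
    obtain rfl := eq_of_edgeInComp h3 hK hdist he ha hb
    obtain rfl : a = k := by omega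
    exact ha
  have hinj : Function.Injective v := fun i j hvij => by_contra fun hij => by
    obtain ⟨e, he, hie, hj⟩ := (hv i).2 j (Ne.symm hij)
    obtain ⟨k, hkj, hk⟩ := (hv j).1 e he (hvij ▸ hie)
    exact hkj (eq_of_edgeInComp h3 hK hdist he hk hj)
  obtain ⟨w, hw⟩ := exists_forall_mem_link hlink hinj
  obtain ⟨z, hz, i, j, k, hij, hik, hjk, hzj, hzk⟩ :=
    exists_mem_two_links_of_forall_mem_link h3 hlink hinj hw
  exact hdist j k hjk (tightConn_of_mem_link h3 (hK j) (hpair i k j hik hij (Ne.symm hjk))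
    (hpair i j k hij hik hjk) (hw i k hik) (hw i j hij) (hz i) (hz k) (hz j) hzk hzj)
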